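/- Suppose Ω ⊆ ℝᵖ is compact and A(ω), q(ω) are continuous in ω. If there exists a nonzero x ≥ 0 with A(ω)x^{m-1} ≥ 0 and xᵀA(ω)x^{m-1} = 0 for all ω ∈ Ω, then the residual function r(y) = max_{ω∈Ω} ‖min(y, A(ω)y^{m-1} + q(ω))‖² is not level bounded: there exists K > 0 such that for all k ≥ K, r(kx) ≤ Σ_{i=1}^n max_{ω∈Ω} q_i(ω)², while ‖kx‖ → ∞ as k → ∞. -/
import Mathlib


open Filter

def tmul {n k : ℕ} (a : Fin n → (Fin k → Fin n) → ℝ) (x : Fin n → ℝ) (i : Fin n) : ℝ :=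
  ∑ j : Fin k → Fin n, a i j * ∏ t : Fin k, x (j t)

lemma tmul_smul {n k : ℕ} (a : Fin n → (Fin k → Fin n) → ℝ) (c : ℝ) (x : Fin n → ℝ)
    (i : Fin n) : tmul a (c • x) i = c ^ k * tmul a x i := by
  unfold tmul
  rw [Finset.mul_sum]
  refine Finset.sum_congr rfl fun j _ => ?_
  have h : (∏ t : Fin k, (c • x) (j t)) = c ^ k * ∏ t : Fin k, x (j t) := by
    simp [Finset.prod_mul_distrib]
  rw [h]; ring

/-- If a nonzero `x ≥ 0` solves the homogeneous semi-infinite problem, then the residual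
function `r(y) = max_{ω∈Ω} ‖min(y, A(ω)y^{m-1} + q(ω))‖²` is not level bounded: there is
`K > 0` such that `r(kx) ≤ Σᵢ max_{ω∈Ω} qᵢ(ω)²` for all `k ≥ K`, while `‖kx‖ → ∞`. -/
theorem residual_not_levelBounded_of_nonzero_solution {n k p : ℕ} (hk : 1 ≤ k)
    (Ω : Set (Fin p → ℝ)) (hΩ : IsCompact Ω)
    (A : (Fin p → ℝ) → Fin n → (Fin k → Fin n) → ℝ) (q : (Fin p → ℝ) → Fin n → ℝ)
    (hA : ∀ i j, ContinuousOn (fun ω => A ω i j) Ω)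
    (hq : ∀ i, ContinuousOn (fun ω => q ω i) Ω)
    (r : (Fin n → ℝ) → ℝ)
    (hr : ∀ y, r y = sSup ((fun ω => ∑ i, min (y i) (tmul (A ω) y i + q ω i) ^ 2) '' Ω))
    (x : Fin n → ℝ) (hx0 : x ≠ 0) (hxnn : ∀ i, 0 ≤ x i)
    (hsol : ∀ ω ∈ Ω, (∀ i, 0 ≤ tmul (A ω) x i) ∧ ∑ i, x i * tmul (A ω) x i = 0) :
    (∃ K : ℝ, 0 < K ∧ ∀ c : ℝ, K ≤ c →
        r (c • x) ≤ ∑ i, sSup ((fun ω => q ω i ^ 2) '' Ω)) ∧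
      Tendsto (fun c : ℝ => ‖c • x‖) atTop atTop := by
  have hxnorm : 0 < ‖x‖ := norm_pos_iff.mpr hx0
  constructor
  · choose B hB using fun i => hΩ.bddAbove_image (hq i)
    set K : ℝ := 1 + ∑ i, (if 0 < x i then max (B i) 0 / x i else 0) with hK
    have hterm : ∀ i, 0 ≤ (if 0 < x i then max (B i) 0 / x i else 0) := by
      intro i
      split
      · exact div_nonneg (le_max_right _ _) (le_of_lt ‹_›)
      · exact le_refl 0
    have hsumnn : 0 ≤ ∑ i, (if 0 < x i then max (B i) 0 / x i else 0) :=
      Finset.sum_nonneg fun i _ => hterm i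
    have hKpos : 0 < K := by rw [hK]; linarith
    have hKi : ∀ i, 0 < x i → max (B i) 0 / x i ≤ K := by
      intro i hi
      have h1 := Finset.single_le_sum (fun j (_ : j ∈ Finset.univ) => hterm j)
        (Finset.mem_univ i)
      rw [if_pos hi] at h1
      rw [hK]; linarith
    refine ⟨K, hKpos, fun c hc => ?_⟩
    have hc0 : 0 < c := lt_of_lt_of_le hKpos hc
    rw [hr]
    have hRHSnn : 0 ≤ ∑ i, sSup ((fun ω => q ω i ^ 2) '' Ω) := by
      refine Finset.sum_nonneg fun i _ => Real.sSup_nonneg ?_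
      rintro _ ⟨ω, hω, rfl⟩
      positivity
    refine Real.sSup_le ?_ hRHSnn
    rintro _ ⟨ω, hω, rfl⟩
    refine Finset.sum_le_sum fun i _ => ?_
    have hbdd : BddAbove ((fun ω => q ω i ^ 2) '' Ω) :=
      hΩ.bddAbove_image ((hq i).pow 2)
    have hsup : q ω i ^ 2 ≤ sSup ((fun ω => q ω i ^ 2) '' Ω) :=
      le_csSup hbdd ⟨ω, hω, rfl⟩
    refine le_trans ?_ hsup
    obtain ⟨ht, hsum⟩ := hsol ω hω
    have hcomp : x i * tmul (A ω) x i = 0 :=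
      (Finset.sum_eq_zero_iff_of_nonneg
        (fun j _ => mul_nonneg (hxnn j) (ht j))).mp hsum i (Finset.mem_univ i)
    rw [tmul_smul]
    simp only [Pi.smul_apply, smul_eq_mul]
    rcases lt_or_eq_of_le (hxnn i) with hxi | hxi
    · have ht0 : tmul (A ω) x i = 0 := by
        rcases mul_eq_zero.mp hcomp with h | h
        · exact absurd h (ne_of_gt hxi)
        · exact h
      rw [ht0, mul_zero, zero_add]
      have hq_le : q ω i ≤ c * x i := by
        have h1 : q ω i ≤ B i := hB i ⟨ω, hω, rfl⟩
        have h2 := hKi i hxi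
        rw [div_le_iff₀ hxi] at h2
        have h3 : K * x i ≤ c * x i := mul_le_mul_of_nonneg_right hc hxi.le
        have h4 : B i ≤ max (B i) 0 := le_max_left _ _
        linarith
      rw [min_eq_right hq_le]
    · rw [← hxi, mul_zero]
      have ht' : 0 ≤ c ^ k * tmul (A ω) x i :=
        mul_nonneg (pow_nonneg hc0.le k) (ht i)
      set v := c ^ k * tmul (A ω) x i + q ω i with hv
      have hqv : q ω i ≤ v := by rw [hv]; linarith
      rcases le_or_gt 0 v with h | h
      · rw [min_eq_left h]
        simpa using sq_nonneg (q ω i)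
      · rw [min_eq_right h.le]
        nlinarith
  · have heq : ∀ c : ℝ, ‖c • x‖ = |c| * ‖x‖ := fun c => by
      rw [norm_smul, Real.norm_eq_abs]
    simp only [heq]
    exact tendsto_abs_atTop_atTop.atTop_mul_const hxnorm
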